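/- For every natural number n ≥ 1, ∑_{j=1}^{n} H_{n+1−j}/j = H_{n+1}² − H_{n+1}^{(2)}, where H_k is the k-th harmonic number and H_k^{(2)} = ∑_{i=1}^{k} 1/i² is the k-th harmonic number of order 2. -/

import Mathlib

open Finset

noncomputable def H (n : ℕ) : ℝ := ∑ i ∈ Finset.Icc 1 n, (1:ℝ)/i
noncomputable def H2 (n : ℕ) : ℝ := ∑ i ∈ Finset.Icc 1 n, (1:ℝ)/(i:ℝ)^2

/-!
Both sides grow by `2 H_{n+1} / (n+2)` when `n` increases by one. On the right this is
`(H + x)² - (H2 + x²) = H² - H2 + 2xH` with `x = 1/(n+2)`. On the left, raising every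
`H_{n+1-j}` by `1/(n+2-j)` adds `∑_{j ≤ n+1} 1/(j(n+2-j))`, which the partial fraction
`1/(j(m-j)) = (1/j + 1/(m-j))/m` and the symmetry `j ↦ m - j` turn into `2 H_{n+1} / (n+2)`.
-/

theorem Finset.sum_Icc_one_reflect {M : Type*} [AddCommMonoid M] (f : ℕ → M) (n : ℕ) :
    ∑ j ∈ Icc 1 n, f (n + 1 - j) = ∑ j ∈ Icc 1 n, f j := by
  apply sum_nbij' (fun j ↦ n + 1 - j) (fun j ↦ n + 1 - j) <;> intro j hj <;> grind

lemma H_zero : H 0 = 0 := by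
  simp [H]

lemma H_succ (n : ℕ) : H (n + 1) = H n + 1 / (n + 1) := by
  rw [H, sum_Icc_succ_top (Nat.le_add_left 1 n), ← H, Nat.cast_succ]

lemma H2_succ (n : ℕ) : H2 (n + 1) = H2 n + 1 / (n + 1) ^ 2 := by
  rw [H2, sum_Icc_succ_top (Nat.le_add_left 1 n), ← H2, Nat.cast_succ]

lemma sq_H_sub_H2_succ (n : ℕ) :
    H (n + 1) ^ 2 - H2 (n + 1) = H n ^ 2 - H2 n + 2 * H n / (n + 1) := by
  rw [H_succ, H2_succ, ← one_div_pow]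
  ring

lemma sum_Icc_one_div_mul_reflect (n : ℕ) :
    ∑ j ∈ Icc 1 n, 1 / ((j : ℝ) * ((n + 1 - j : ℕ) : ℝ)) = 2 * H n / (n + 1) := by
  have partial_fraction : ∀ j ∈ Icc 1 n, 1 / ((j : ℝ) * ((n + 1 - j : ℕ) : ℝ))
      = (1 / (j : ℝ) + 1 / ((n + 1 - j : ℕ) : ℝ)) / (n + 1) := by
    intro j hj
    obtain ⟨hj1, hjn⟩ := mem_Icc.mp hj
    have hj0 : (j : ℝ) ≠ 0 := Nat.cast_ne_zero.mpr (by omega)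
    have hk0 : ((n + 1 - j : ℕ) : ℝ) ≠ 0 := Nat.cast_ne_zero.mpr (by omega)
    have hsum : (j : ℝ) + ((n + 1 - j : ℕ) : ℝ) = n + 1 := by
      exact_mod_cast (by omega : j + (n + 1 - j) = n + 1)
    rw [one_div_add_one_div hj0 hk0, hsum, div_div_cancel_left' (by positivity), one_div]
  rw [sum_congr rfl partial_fraction, ← sum_div, sum_add_distrib,
    sum_Icc_one_reflect (fun j ↦ 1 / (j : ℝ)), H]
  ring

lemma sum_H_sub_div_succ (n : ℕ) :
    ∑ j ∈ Icc 1 (n + 1), H (n + 1 + 1 - j) / j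
      = ∑ j ∈ Icc 1 n, H (n + 1 - j) / j + 2 * H (n + 1) / (n + 2) := by
  have raise : ∀ j ∈ Icc 1 (n + 1), H (n + 1 + 1 - j) / j
      = H (n + 1 - j) / j + 1 / ((j : ℝ) * ((n + 1 + 1 - j : ℕ) : ℝ)) := by
    intro j hj
    have hk : n + 1 + 1 - j = (n + 1 - j) + 1 := by grind
    rw [hk, H_succ, Nat.cast_succ, add_div, div_div, mul_comm _ (j : ℝ)]
  rw [sum_congr rfl raise, sum_add_distrib, sum_Icc_succ_top (Nat.le_add_left 1 n),
    Nat.sub_self, H_zero, sum_Icc_one_div_mul_reflect, Nat.cast_succ]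
  ring

theorem stmt5_general (n : ℕ) :
    ∑ j ∈ Icc 1 n, H (n+1-j)/(j:ℝ) = (H (n+1))^2 - H2 (n+1) := by
  induction n with
  | zero => simp [H, H2]
  | succ n ih =>
    rw [sum_H_sub_div_succ, ih, sq_H_sub_H2_succ (n + 1), Nat.cast_succ]
    ring

theorem stmt5 (n : ℕ) (hn : 1 ≤ n) :
    ∑ j ∈ Icc 1 n, H (n+1-j)/(j:ℝ) = (H (n+1))^2 - H2 (n+1) :=
  stmt5_general n
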